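/- Let G be a maximal stabilizer group on N qubits with stabilizer state |ψ_G⟩, and let Ĥ be a traceless Hermitian operator. Then Ĥ|ψ_G⟩ = 0 if and only if Ĥ can be written as a linear combination of terms of the form c(P,Q)(P − a_{P,Q}Q), where P, Q range over nonidentity prefactor-1 Pauli strings such that a_{P,Q}·P·Q ∈ G for a phase a_{P,Q} ∈ {±1,±i}. -/

import Mathlib

open Matrix Complex BigOperators
open scoped Classical

noncomputable section

/-- Single-qubit Pauli matrices: I, X, Y, Z. -/
def pauli1 : Fin 4 → Matrix (Fin 2) (Fin 2) ℂ
  | 0 => 1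
  | 1 => !![0, 1; 1, 0]
  | 2 => !![0, -Complex.I; Complex.I, 0]
  | 3 => !![1, 0; 0, -1]

/-- Operators on an N-qubit system with sites indexed by `V`. -/
abbrev QOp (V : Type*) := Matrix (V → Fin 2) (V → Fin 2) ℂ

/-- The prefactor-1 Pauli string with single-site labels `p`. -/
def pauliOp {V : Type*} [Fintype V] (p : V → Fin 4) : QOp V :=
  Matrix.of fun x y => ∏ i, pauli1 (p i) (x i) (y i)

/-- Support of a Pauli string: sites where the tensor factor is not the identity. -/
def psupp {V : Type*} [Fintype V] (p : V → Fin 4) : Finset V :=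
  Finset.univ.filter fun i => p i ≠ 0

/-- Allowed phases of Pauli group elements. -/
def isPhase (a : ℂ) : Prop := a = 1 ∨ a = -1 ∨ a = Complex.I ∨ a = -Complex.I

/-- A maximal stabilizer group on qubits indexed by `V`: an abelian set of
prefactor-`±1` Pauli strings, closed under multiplication, containing `I`,
not containing `-I`, of cardinality `2 ^ |V|`. -/
structure MaxStabilizer (V : Type*) [Fintype V] [DecidableEq V] where
  carrier : Finset (QOp V)
  mem_pauli : ∀ g ∈ carrier, ∃ (c : ℂ) (p : V → Fin 4), (c = 1 ∨ c = -1) ∧ g = c • pauliOp p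
  one_mem : (1 : QOp V) ∈ carrier
  mul_mem : ∀ g ∈ carrier, ∀ h ∈ carrier, g * h ∈ carrier
  mul_comm' : ∀ g ∈ carrier, ∀ h ∈ carrier, g * h = h * g
  neg_one_not_mem : (-1 : QOp V) ∉ carrier
  card_eq : carrier.card = 2 ^ Fintype.card V

/-- `ψ` is the stabilizer state of `G`: a normalized common `+1`-eigenvector of all
elements of `G`. -/
def IsStabState {V : Type*} [Fintype V] [DecidableEq V] (G : MaxStabilizer V)
    (ψ : (V → Fin 2) → ℂ) : Prop :=
  (∀ g ∈ G.carrier, Matrix.mulVec g ψ = ψ) ∧ ∑ x, starRingEnd ℂ (ψ x) * ψ x = 1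

/-- The projector `|ψ⟩⟨ψ|` onto a state `ψ`. -/
def projOf {V : Type*} (ψ : (V → Fin 2) → ℂ) : QOp V :=
  Matrix.vecMulVec ψ fun x => starRingEnd ℂ (ψ x)

/-- Reduced density matrix (partial trace over the complement of `A`). -/
def reduced {V : Type*} [Fintype V] [DecidableEq V] (ρ : QOp V) (A : Finset V) :
    Matrix ({i // i ∈ A} → Fin 2) ({i // i ∈ A} → Fin 2) ℂ :=
  Matrix.of fun a b => ∑ c : {i // i ∉ A} → Fin 2,
    ρ (fun i => if h : i ∈ A then a ⟨i, h⟩ else c ⟨i, h⟩)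
      (fun i => if h : i ∈ A then b ⟨i, h⟩ else c ⟨i, h⟩)

/-- `δ(G)`: minimum support size over nonidentity elements of `G`. -/
def sdelta {V : Type*} [Fintype V] [DecidableEq V] (G : MaxStabilizer V) : ℕ :=
  sInf {k | ∃ (c : ℂ) (p : V → Fin 4), (c = 1 ∨ c = -1) ∧ c • pauliOp p ∈ G.carrier ∧
    c • pauliOp p ≠ 1 ∧ (psupp p).card = k}

/-!
Expand `Ĥ = ∑_P h_P P` in Pauli strings; `h_I = 0` because `Ĥ` is traceless. Since `G` is
maximal, `|ψ⟩⟨ψ| = 2^{-N} ∑_{g ∈ G} g`, so `⟨ψ|Q P|ψ⟩` is the phase `a` with `a P Q ∈ G` when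
such a phase exists, and `0` otherwise. Call `P ~ Q` in the first case and pick a representative
`R` in each class: then `Ĥ = ∑_P h_P (P - a_{P,R} R) + ∑_R (∑_{P ~ R} h_P a_{P,R}) R`, and each
inner sum is `⟨ψ|R Ĥ|ψ⟩ = 0`. Conversely, `a P Q ψ = ψ` gives `P ψ = a Q ψ`.
-/

def pauli1MulPhase (j k : Fin 4) : ℂ :=
  ![![1, 1, 1, 1], ![1, 1, I, -I], ![1, -I, 1, I], ![1, I, -I, 1]] j k

lemma pauli1_mul (j k : Fin 4) : pauli1 j * pauli1 k = pauli1MulPhase j k • pauli1 (j ^^^ k) := by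
  fin_cases j <;> fin_cases k <;> ext a b <;> fin_cases a <;> fin_cases b <;>
    simp [pauli1, pauli1MulPhase, Matrix.mul_apply, Fin.sum_univ_two, Matrix.one_apply]

lemma pauli1MulPhase_self (j : Fin 4) : pauli1MulPhase j j = 1 := by
  fin_cases j <;> rfl

lemma fin4_xor_eq_zero_iff {j k : Fin 4} : j ^^^ k = 0 ↔ j = k := by revert j k; decide

lemma pauli1_conj (j : Fin 4) (a b : Fin 2) : star (pauli1 j a b) = pauli1 j b a := by
  fin_cases j <;> fin_cases a <;> fin_cases b <;> simp [pauli1]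

lemma trace_pauli1 (j : Fin 4) : ∑ a, pauli1 j a a = if j = 0 then 2 else 0 := by
  fin_cases j <;> simp [pauli1, Fin.sum_univ_two]

lemma sum_pauli1_mul_pauli1 (a b c d : Fin 2) :
    ∑ k, pauli1 k a b * pauli1 k c d = if a = d ∧ b = c then 2 else 0 := by
  fin_cases a <;> fin_cases b <;> fin_cases c <;> fin_cases d <;>
    simp [pauli1, Fin.sum_univ_four] <;> ring_nf

lemma isPhase_iff_pow_four {a : ℂ} : isPhase a ↔ a ^ 4 = 1 := by
  have h4 : a ^ 4 - 1 = (a - 1) * (a + 1) * (a - I) * (a + I) := by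
    ring_nf; rw [I_sq]; ring
  rw [← sub_eq_zero, h4]
  simp only [isPhase, mul_eq_zero, sub_eq_zero, add_eq_zero_iff_eq_neg]
  tauto

namespace isPhase

lemma star_mul_self {a : ℂ} (ha : isPhase a) : star a * a = 1 := by
  rcases ha with rfl | rfl | rfl | rfl <;> simp

lemma star {a : ℂ} (ha : isPhase a) : isPhase (star a) := by
  rw [isPhase_iff_pow_four] at ha ⊢
  rw [← star_pow, ha, star_one]

lemma mul {a b : ℂ} (ha : isPhase a) (hb : isPhase b) : isPhase (a * b) := by
  rw [isPhase_iff_pow_four] at ha hb ⊢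
  rw [mul_pow, ha, hb, one_mul]

lemma inv {a : ℂ} (ha : isPhase a) : isPhase a⁻¹ := by
  rw [isPhase_iff_pow_four] at ha ⊢
  rw [inv_pow, ha, inv_one]

lemma ne_zero {a : ℂ} (ha : isPhase a) : a ≠ 0 := by
  rcases ha with rfl | rfl | rfl | rfl <;> simp

lemma prod {ι : Type*} {s : Finset ι} {f : ι → ℂ} (hf : ∀ i ∈ s, isPhase (f i)) :
    isPhase (∏ i ∈ s, f i) := by
  rw [isPhase_iff_pow_four, ← Finset.prod_pow]
  exact Finset.prod_eq_one fun i hi => isPhase_iff_pow_four.1 (hf i hi)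

end isPhase

lemma isPhase_pauli1MulPhase (j k : Fin 4) : isPhase (pauli1MulPhase j k) := by
  fin_cases j <;> fin_cases k <;> simp [isPhase, pauli1MulPhase]

section PauliString

variable {V : Type*} [Fintype V]

lemma pauliOp_apply (p : V → Fin 4) (x y : V → Fin 2) :
    pauliOp p x y = ∏ i, pauli1 (p i) (x i) (y i) := rfl

lemma pauliOp_conjTranspose (p : V → Fin 4) : (pauliOp p)ᴴ = pauliOp p := by
  ext x y
  simp only [conjTranspose_apply, pauliOp_apply, star_prod, pauli1_conj]

@[simp]
lemma pauliOp_zero : pauliOp (0 : V → Fin 4) = 1 := by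
  ext x y
  simp [pauliOp_apply, pauli1, Matrix.one_apply, Finset.prod_boole, funext_iff]

variable [DecidableEq V]

lemma pauliOp_mul (p q : V → Fin 4) :
    pauliOp p * pauliOp q =
      (∏ i, pauli1MulPhase (p i) (q i)) • pauliOp (fun i => p i ^^^ q i) := by
  ext x y
  have h : ∀ i, (pauli1 (p i) * pauli1 (q i)) (x i) (y i) =
      pauli1MulPhase (p i) (q i) * pauli1 (p i ^^^ q i) (x i) (y i) := fun i => by
    rw [pauli1_mul, Matrix.smul_apply, smul_eq_mul]
  simp only [mul_apply] at h
  rw [mul_apply, Matrix.smul_apply, smul_eq_mul, pauliOp_apply, ← Finset.prod_mul_distrib,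
    ← Finset.prod_congr rfl fun i _ => h i, Fintype.prod_sum]
  simp only [pauliOp_apply, Finset.prod_mul_distrib]

lemma pauliOp_mul_self (p : V → Fin 4) : pauliOp p * pauliOp p = 1 := by
  rw [pauliOp_mul]
  simp only [Fin.xor_self, pauli1MulPhase_self, Finset.prod_const_one, one_smul]
  exact pauliOp_zero

lemma trace_pauliOp (p : V → Fin 4) :
    (pauliOp p).trace = if p = 0 then 2 ^ Fintype.card V else 0 := by
  calc (pauliOp p).trace = ∏ i, ∑ t, pauli1 (p i) t t :=
        (Fintype.prod_sum fun i t => pauli1 (p i) t t).symm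
    _ = _ := by simp only [trace_pauli1, Fintype.prod_ite_zero]; simp [funext_iff]

lemma eq_of_trace_pauliOp_mul_ne_zero {p q : V → Fin 4}
    (h : (pauliOp p * pauliOp q).trace ≠ 0) : p = q := by
  rw [pauliOp_mul, trace_smul, trace_pauliOp] at h
  by_contra hpq
  refine h ?_
  rw [if_neg, smul_zero]
  intro h0
  exact hpq (funext fun i => fin4_xor_eq_zero_iff.1 (congrFun h0 i))

lemma sum_pauliOp_apply_mul_pauliOp_apply (x y u v : V → Fin 2) :
    ∑ p, pauliOp p x y * pauliOp p u v = if x = v ∧ y = u then 2 ^ Fintype.card V else 0 := by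
  calc ∑ p, pauliOp p x y * pauliOp p u v
      = ∏ i, ∑ k, pauli1 k (x i) (y i) * pauli1 k (u i) (v i) := by
        simp only [pauliOp_apply, ← Finset.prod_mul_distrib, Fintype.prod_sum]
    _ = _ := by simp [sum_pauli1_mul_pauli1, Fintype.prod_ite_zero, funext_iff, forall_and]

def pauliCoeff (M : QOp V) (p : V → Fin 4) : ℂ := (2 ^ Fintype.card V)⁻¹ * (pauliOp p * M).trace

lemma sum_pauliCoeff_smul_pauliOp (M : QOp V) : ∑ p, pauliCoeff M p • pauliOp p = M := by
  ext u v
  calc (∑ p, pauliCoeff M p • pauliOp p) u v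
      = (2 ^ Fintype.card V)⁻¹ * ∑ x, ∑ y, M y x * ∑ p, pauliOp p x y * pauliOp p u v := by
        simp only [Matrix.sum_apply, Matrix.smul_apply, smul_eq_mul, pauliCoeff, trace, diag,
          mul_apply, Finset.mul_sum, Finset.sum_mul]
        rw [Finset.sum_comm]
        refine Finset.sum_congr rfl fun x _ => ?_
        rw [Finset.sum_comm]
        exact Finset.sum_congr rfl fun y _ => Finset.sum_congr rfl fun p _ => by ring
    _ = M u v := by
        simp [sum_pauliOp_apply_mul_pauliOp_apply, ite_and]
        field_simp

end PauliString


namespace MaxStabilizer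

variable {V : Type*} [Fintype V] [DecidableEq V] (G : MaxStabilizer V) {g : QOp V}

lemma mul_self_of_mem (hg : g ∈ G.carrier) : g * g = 1 := by
  obtain ⟨c, p, hc, rfl⟩ := G.mem_pauli g hg
  rw [smul_mul_smul_comm, pauliOp_mul_self]
  rcases hc with rfl | rfl <;> simp

lemma conjTranspose_of_mem (hg : g ∈ G.carrier) : gᴴ = g := by
  obtain ⟨c, p, hc, rfl⟩ := G.mem_pauli g hg
  rw [conjTranspose_smul, pauliOp_conjTranspose]
  rcases hc with rfl | rfl <;> simp

lemma trace_of_mem_of_ne_one (hg : g ∈ G.carrier) (hg1 : g ≠ 1) : g.trace = 0 := by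
  obtain ⟨c, p, hc, rfl⟩ := G.mem_pauli g hg
  have hp : p ≠ 0 := by
    rintro rfl
    rcases hc with rfl | rfl
    · simp at hg1
    · exact G.neg_one_not_mem (by simpa using hg)
  rw [trace_smul, trace_pauliOp, if_neg hp, smul_zero]

lemma sum_mul_of_mem (hg : g ∈ G.carrier) : ∑ h ∈ G.carrier, g * h = ∑ h ∈ G.carrier, h :=
  Finset.sum_nbij' (g * ·) (g * ·) (fun h hh => G.mul_mem g hg h hh)
    (fun h hh => G.mul_mem g hg h hh) (fun h _ => by simp [← mul_assoc, G.mul_self_of_mem hg])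
    (fun h _ => by simp [← mul_assoc, G.mul_self_of_mem hg]) fun _ _ => rfl

lemma natCast_card_carrier : (G.carrier.card : ℂ) = 2 ^ Fintype.card V := by simp [G.card_eq]

def proj : QOp V := ((2 : ℂ) ^ Fintype.card V)⁻¹ • ∑ g ∈ G.carrier, g

lemma isIdempotentElem_proj : IsIdempotentElem G.proj := by
  rw [IsIdempotentElem, proj, smul_mul_smul_comm, Finset.sum_mul_sum,
    Finset.sum_congr rfl fun g hg => G.sum_mul_of_mem hg, Finset.sum_const,
    ← Nat.cast_smul_eq_nsmul ℂ, G.natCast_card_carrier, smul_smul, inv_mul_cancel_right₀ (by simp)]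

lemma isHermitian_proj : G.proj.IsHermitian := by
  rw [IsHermitian, proj, conjTranspose_smul, conjTranspose_sum,
    Finset.sum_congr rfl fun g hg => G.conjTranspose_of_mem hg]
  simp

lemma trace_proj : G.proj.trace = 1 := by
  rw [proj, trace_smul, trace_sum,
    Finset.sum_eq_single_of_mem 1 G.one_mem fun g hg hg1 => G.trace_of_mem_of_ne_one hg hg1]
  simp

lemma proj_mulVec {ψ : (V → Fin 2) → ℂ} (hψ : IsStabState G ψ) : G.proj *ᵥ ψ = ψ := by
  rw [proj, smul_mulVec, sum_mulVec, Finset.sum_congr rfl hψ.1, Finset.sum_const,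
    ← Nat.cast_smul_eq_nsmul ℂ, G.natCast_card_carrier, smul_smul, inv_mul_cancel₀ (by simp),
    one_smul]

end MaxStabilizer

open scoped ComplexOrder in
lemma Matrix.eq_of_isIdempotentElem_of_mul_eq_of_trace_eq {n : Type*} [Fintype n] [DecidableEq n]
    {P Q : Matrix n n ℂ} (hP : P.IsHermitian) (hPP : IsIdempotentElem P) (hQ : Q.IsHermitian)
    (hQQ : IsIdempotentElem Q) (hPQ : P * Q = Q) (htr : P.trace = Q.trace) : P = Q := by
  have hQP : Q * P = Q := by
    simpa only [conjTranspose_mul, hP.eq, hQ.eq] using congrArg conjTranspose hPQ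
  have h : (P - Q)ᴴ * (P - Q) = P - Q := by
    rw [conjTranspose_sub, hP.eq, hQ.eq, sub_mul, mul_sub, mul_sub, hPP.eq, hQQ.eq, hPQ, hQP]
    abel
  rw [← sub_eq_zero, ← trace_conjTranspose_mul_self_eq_zero_iff, h, trace_sub, htr, sub_self]

section StabilizerState

lemma projOf_eq_vecMulVec {V : Type*} (ψ : (V → Fin 2) → ℂ) : projOf ψ = vecMulVec ψ (star ψ) :=
  rfl

lemma isHermitian_projOf {V : Type*} (ψ : (V → Fin 2) → ℂ) : (projOf ψ).IsHermitian := by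
  ext x y
  simp [projOf, vecMulVec_apply, mul_comm]

variable {V : Type*} [Fintype V] [DecidableEq V] {ψ : (V → Fin 2) → ℂ}

lemma trace_mul_projOf (M : QOp V) (ψ : (V → Fin 2) → ℂ) :
    (M * projOf ψ).trace = (M *ᵥ ψ) ⬝ᵥ star ψ := by
  rw [projOf_eq_vecMulVec, mul_vecMulVec, trace_vecMulVec]

variable {G : MaxStabilizer V}

lemma IsStabState.star_dotProduct (hψ : IsStabState G ψ) : star ψ ⬝ᵥ ψ = 1 := hψ.2

lemma IsStabState.dotProduct_star (hψ : IsStabState G ψ) : ψ ⬝ᵥ star ψ = 1 := by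
  rw [dotProduct_comm, hψ.star_dotProduct]

lemma IsStabState.isIdempotentElem_projOf (hψ : IsStabState G ψ) :
    IsIdempotentElem (projOf ψ) := by
  rw [IsIdempotentElem, projOf_eq_vecMulVec, vecMulVec_mul_vecMulVec, hψ.star_dotProduct,
    one_smul]

/-- The trace condition holds because `|G| = 2 ^ N`: this is where maximality of `G` enters. -/
lemma IsStabState.projOf_eq_proj (hψ : IsStabState G ψ) : projOf ψ = G.proj := by
  refine (eq_of_isIdempotentElem_of_mul_eq_of_trace_eq G.isHermitian_proj G.isIdempotentElem_proj
    (isHermitian_projOf ψ) hψ.isIdempotentElem_projOf ?_ ?_).symm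
  · rw [projOf_eq_vecMulVec, mul_vecMulVec, G.proj_mulVec hψ]
  · rw [G.trace_proj, projOf_eq_vecMulVec, trace_vecMulVec, hψ.dotProduct_star]

end StabilizerState

namespace MaxStabilizer

variable {V : Type*} [Fintype V] [DecidableEq V] (G : MaxStabilizer V)

def Related (P Q : V → Fin 4) : Prop :=
  ∃ b, isPhase b ∧ b • (pauliOp P * pauliOp Q) ∈ G.carrier

variable {G} {ψ : (V → Fin 2) → ℂ}

lemma star_smul_pauliOp_mul_mem {P Q : V → Fin 4} {b : ℂ}
    (h : b • (pauliOp P * pauliOp Q) ∈ G.carrier) :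
    star b • (pauliOp Q * pauliOp P) ∈ G.carrier := by
  have hH := G.conjTranspose_of_mem h
  rw [conjTranspose_smul, conjTranspose_mul, pauliOp_conjTranspose, pauliOp_conjTranspose] at hH
  rwa [hH]

lemma Related.refl (P : V → Fin 4) : G.Related P P :=
  ⟨1, Or.inl rfl, by simpa [pauliOp_mul_self] using G.one_mem⟩

lemma Related.symm {P Q : V → Fin 4} (h : G.Related P Q) : G.Related Q P :=
  let ⟨b, hb, hmem⟩ := h
  ⟨star b, hb.star, star_smul_pauliOp_mul_mem hmem⟩

lemma Related.trans {P Q R : V → Fin 4} (h : G.Related P Q) (h' : G.Related Q R) :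
    G.Related P R := by
  obtain ⟨b, hb, hmem⟩ := h
  obtain ⟨d, hd, hmem'⟩ := h'
  refine ⟨b * d, hb.mul hd, ?_⟩
  have hprod := G.mul_mem _ hmem _ hmem'
  rwa [smul_mul_smul_comm, mul_assoc, ← mul_assoc (pauliOp Q), pauliOp_mul_self, one_mul]
    at hprod

lemma mulVec_eq_star_smul_of_smul_mem (hψ : IsStabState G ψ) {b : ℂ} (hb : isPhase b)
    {M : QOp V} (h : b • M ∈ G.carrier) : M *ᵥ ψ = star b • ψ := by
  calc M *ᵥ ψ = (star b * b) • M *ᵥ ψ := by rw [hb.star_mul_self, one_smul]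
    _ = star b • ψ := by rw [mul_smul, ← smul_mulVec, hψ.1 _ h]

lemma trace_pauliOp_mul_projOf_eq (hψ : IsStabState G ψ) {P Q : V → Fin 4} {b : ℂ}
    (hb : isPhase b) (h : b • (pauliOp P * pauliOp Q) ∈ G.carrier) :
    (pauliOp Q * pauliOp P * projOf ψ).trace = b := by
  rw [trace_mul_projOf, mulVec_eq_star_smul_of_smul_mem hψ hb.star (star_smul_pauliOp_mul_mem h),
    star_star, smul_dotProduct, hψ.dotProduct_star, smul_eq_mul, mul_one]

lemma related_of_trace_pauliOp_mul_projOf_ne_zero (hψ : IsStabState G ψ) {P Q : V → Fin 4}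
    (h : (pauliOp Q * pauliOp P * projOf ψ).trace ≠ 0) : G.Related P Q := by
  rw [hψ.projOf_eq_proj, proj, mul_smul_comm, trace_smul, Finset.mul_sum, trace_sum] at h
  obtain ⟨g, hg, hne⟩ : ∃ g ∈ G.carrier, (pauliOp Q * pauliOp P * g).trace ≠ 0 := by
    by_contra! h0
    simp [Finset.sum_eq_zero h0] at h
  obtain ⟨c, p, hc, rfl⟩ := G.mem_pauli g hg
  rw [pauliOp_mul Q P, smul_mul_assoc, mul_smul_comm, trace_smul, trace_smul] at hne
  have hp := eq_of_trace_pauliOp_mul_ne_zero (right_ne_zero_of_smul (right_ne_zero_of_smul hne))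
  have hs : isPhase (∏ i, pauli1MulPhase (P i) (Q i)) :=
    isPhase.prod fun i _ => isPhase_pauli1MulPhase (P i) (Q i)
  have hPQ : pauliOp P * pauliOp Q = (∏ i, pauli1MulPhase (P i) (Q i)) • pauliOp p := by
    simp only [pauliOp_mul, ← hp, Fin.xor_comm (P _)]
  refine ⟨c * (∏ i, pauli1MulPhase (P i) (Q i))⁻¹, ?_, ?_⟩
  · exact (by rcases hc with rfl | rfl <;> simp [isPhase] : isPhase c).mul hs.inv
  · rwa [hPQ, smul_smul, mul_assoc, inv_mul_cancel₀ hs.ne_zero, mul_one]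

end MaxStabilizer

theorem Setoid.sum_smul_eq_sum_sum_smul_sub {ι R M : Type*} [Fintype ι] [DecidableEq ι]
    [CommRing R] [AddCommGroup M] [Module R M] (s : Setoid ι) (h : ι → R) (a : ι → ι → R)
    (e : ι → M) (hclass : ∀ q, ∑ p with s p q, h p * a p q = 0) :
    ∑ p, h p • e p =
      ∑ p, ∑ q, (if q = (Quotient.mk s p).out then h p else 0) • (e p - a p q • e q) := by
  have hrep : ∑ p, (h p * a p (Quotient.mk s p).out) • e (Quotient.mk s p).out = 0 := by
    rw [← Finset.sum_fiberwise Finset.univ (Quotient.mk s)]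
    refine Finset.sum_eq_zero fun c _ => ?_
    rw [Finset.sum_congr rfl fun p hp => by rw [(Finset.mem_filter.1 hp).2], ← Finset.sum_smul]
    simp_rw [Quotient.mk_eq_iff_out]
    rw [hclass, zero_smul]
  symm
  calc _ = ∑ p, h p • (e p - a p (Quotient.mk s p).out • e (Quotient.mk s p).out) := by
        simp only [ite_smul, zero_smul, Finset.sum_ite_eq', Finset.mem_univ, if_true]
    _ = _ := by simp only [smul_sub, smul_smul, Finset.sum_sub_distrib, hrep, sub_zero]

namespace MaxStabilizer

variable {V : Type*} [Fintype V] [DecidableEq V] (G : MaxStabilizer V)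

/-- The identity string is kept in a class of its own, so that the class representative of a
nonidentity string is never the identity. -/
def relatedSetoid : Setoid (V → Fin 4) where
  r P Q := (P = 0 ↔ Q = 0) ∧ G.Related P Q
  iseqv := ⟨fun P => ⟨Iff.rfl, .refl P⟩, fun h => ⟨h.1.symm, h.2.symm⟩,
    fun h h' => ⟨h.1.trans h'.1, h.2.trans h'.2⟩⟩

variable {G} {ψ : (V → Fin 2) → ℂ} {H : QOp V}

lemma pauliCoeff_zero_of_trace_eq_zero (htr : H.trace = 0) : pauliCoeff H 0 = 0 := by
  simp [pauliCoeff, htr]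

lemma sum_pauliCoeff_mul_trace_eq_zero (hψ : IsStabState G ψ) (htr : H.trace = 0)
    (hH : H *ᵥ ψ = 0) (Q : V → Fin 4) :
    ∑ P with G.relatedSetoid P Q,
      pauliCoeff H P * (pauliOp Q * pauliOp P * projOf ψ).trace = 0 := by
  have h0 := pauliCoeff_zero_of_trace_eq_zero htr
  by_cases hQ : Q = 0
  · refine Finset.sum_eq_zero fun P hP => ?_
    rw [(Finset.mem_filter.1 hP).2.1.2 hQ, h0, zero_mul]
  rw [Finset.sum_filter]
  calc ∑ P, (if G.relatedSetoid P Q then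
        pauliCoeff H P * (pauliOp Q * pauliOp P * projOf ψ).trace else 0)
      = ∑ P, pauliCoeff H P * (pauliOp Q * pauliOp P * projOf ψ).trace := by
        refine Finset.sum_congr rfl fun P _ => ite_eq_left_iff.2 fun hPQ => ?_
        by_cases hP : P = 0
        · rw [hP, h0, zero_mul]
        have htr0 : (pauliOp Q * pauliOp P * projOf ψ).trace = 0 := by
          by_contra hne
          exact hPQ ⟨iff_of_false hP hQ, related_of_trace_pauliOp_mul_projOf_ne_zero hψ hne⟩
        rw [htr0, mul_zero]
    _ = (pauliOp Q * H * projOf ψ).trace := by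
        conv_rhs => rw [← sum_pauliCoeff_smul_pauliOp H]
        simp only [Finset.mul_sum, Finset.sum_mul, trace_sum, mul_smul_comm, smul_mul_assoc,
          trace_smul, smul_eq_mul]
    _ = 0 := by rw [trace_mul_projOf, ← mulVec_mulVec, hH, mulVec_zero, zero_dotProduct]

theorem exists_eq_sum_of_mulVec_eq_zero (hψ : IsStabState G ψ) (htr : H.trace = 0)
    (hH : H *ᵥ ψ = 0) :
    ∃ a c : (V → Fin 4) → (V → Fin 4) → ℂ,
      (∀ P Q, c P Q ≠ 0 → P ≠ 0 ∧ Q ≠ 0 ∧ isPhase (a P Q) ∧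
        a P Q • (pauliOp P * pauliOp Q) ∈ G.carrier) ∧
      H = ∑ P, ∑ Q, c P Q • (pauliOp P - a P Q • pauliOp Q) := by
  refine ⟨fun P Q => (pauliOp Q * pauliOp P * projOf ψ).trace,
    fun P Q => if Q = (Quotient.mk G.relatedSetoid P).out then pauliCoeff H P else 0,
    fun P Q hc => ?_, ?_⟩
  · obtain ⟨rfl, hcP⟩ := ite_ne_right_iff.1 hc
    obtain ⟨hQP, hrel⟩ := Quotient.mk_out (s := G.relatedSetoid) P
    have hP : P ≠ 0 := by
      rintro rfl
      exact hcP (pauliCoeff_zero_of_trace_eq_zero htr)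
    obtain ⟨b, hb, hmem⟩ := hrel.symm
    dsimp only
    rw [trace_pauliOp_mul_projOf_eq hψ hb hmem]
    exact ⟨hP, mt hQP.1 hP, hb, hmem⟩
  · exact (sum_pauliCoeff_smul_pauliOp H).symm.trans (Setoid.sum_smul_eq_sum_sum_smul_sub _ _ _ _
      (sum_pauliCoeff_mul_trace_eq_zero hψ htr hH))

theorem mulVec_eq_zero_of_eq_sum {a c : (V → Fin 4) → (V → Fin 4) → ℂ} (hψ : IsStabState G ψ)
    (hmem : ∀ P Q, c P Q ≠ 0 → a P Q • (pauliOp P * pauliOp Q) ∈ G.carrier)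
    (hH : H = ∑ P, ∑ Q, c P Q • (pauliOp P - a P Q • pauliOp Q)) : H *ᵥ ψ = 0 := by
  subst hH
  simp only [sum_mulVec]
  refine Finset.sum_eq_zero fun P _ => Finset.sum_eq_zero fun Q _ => ?_
  by_cases hc : c P Q = 0
  · simp [hc]
  have hψPQ := hψ.1 _ (hmem P Q hc)
  have hP : pauliOp P *ᵥ ψ = a P Q • pauliOp Q *ᵥ ψ :=
    calc pauliOp P *ᵥ ψ = pauliOp P *ᵥ (a P Q • (pauliOp P * pauliOp Q)) *ᵥ ψ := by rw [hψPQ]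
      _ = a P Q • pauliOp Q *ᵥ ψ := by
        rw [mulVec_mulVec, mul_smul_comm, ← mul_assoc, pauliOp_mul_self, one_mul, smul_mulVec]
  simp [sub_mulVec, smul_mulVec, hP]

end MaxStabilizer

theorem stmt6_general (N : ℕ) (G : MaxStabilizer (Fin N)) (ψ : (Fin N → Fin 2) → ℂ)
    (hψ : IsStabState G ψ) (H : QOp (Fin N)) (htr : H.trace = 0) :
    H.mulVec ψ = 0 ↔
    ∃ a c : (Fin N → Fin 4) → (Fin N → Fin 4) → ℂ,
      (∀ P Q, c P Q ≠ 0 → P ≠ (fun _ => 0) ∧ Q ≠ (fun _ => 0) ∧ isPhase (a P Q) ∧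
        a P Q • (pauliOp P * pauliOp Q) ∈ G.carrier) ∧
      H = ∑ P : Fin N → Fin 4, ∑ Q : Fin N → Fin 4,
        c P Q • (pauliOp P - a P Q • pauliOp Q) :=
  ⟨MaxStabilizer.exists_eq_sum_of_mulVec_eq_zero hψ htr, fun ⟨_, _, hc, hH⟩ =>
    MaxStabilizer.mulVec_eq_zero_of_eq_sum hψ (fun P Q h => (hc P Q h).2.2.2) hH⟩

/-- a traceless Hermitian `Ĥ` annihilates the stabilizer state iff it is a
linear combination of terms `c(P,Q)·(P - a_{P,Q}·Q)` with `P, Q` nonidentity prefactor-1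
Pauli strings and `a_{P,Q}` a phase such that `a_{P,Q}·P·Q ∈ G`. -/
theorem stmt6 (N : ℕ) (G : MaxStabilizer (Fin N)) (ψ : (Fin N → Fin 2) → ℂ)
    (hψ : IsStabState G ψ) (H : QOp (Fin N)) (htr : H.trace = 0) (hherm : H.IsHermitian) :
    H.mulVec ψ = 0 ↔
    ∃ a c : (Fin N → Fin 4) → (Fin N → Fin 4) → ℂ,
      (∀ P Q, c P Q ≠ 0 → P ≠ (fun _ => 0) ∧ Q ≠ (fun _ => 0) ∧ isPhase (a P Q) ∧
        a P Q • (pauliOp P * pauliOp Q) ∈ G.carrier) ∧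
      H = ∑ P : Fin N → Fin 4, ∑ Q : Fin N → Fin 4,
        c P Q • (pauliOp P - a P Q • pauliOp Q) :=
  stmt6_general N G ψ hψ H htr
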